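/- Let A be a real n×n matrix, 2m = Σ_{i,j} A_{ij} > 0, let g : Fin n → C be a labeling, let i₀ be a node with g(i₀) = r, let s ≠ r, and let g' agree with g except g'(i₀) = s. Set d_t = (1/(2m))(Σ_{j ≠ i₀} (A_{i₀ j} + A_{j i₀})·[g(j)=t] + A_{i₀ i₀}) for each label t. Then e_r(g') = e_r(g) − d_r, e_s(g') = e_s(g) + d_s, and e_t(g') = e_t(g) for every label t ∉ {r, s}. -/
import Mathlib


open Finset

/-- `e_r(g)`: fraction of edges joining vertices within community `r`. -/
noncomputable def eComm {n : ℕ} {C : Type*} [DecidableEq C]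
    (A : Matrix (Fin n) (Fin n) ℝ) (m : ℝ) (g : Fin n → C) (r : C) : ℝ :=
  (1 / (2 * m)) * ∑ i, ∑ j,
    A i j * (if g i = r then (1 : ℝ) else 0) * (if g j = r then (1 : ℝ) else 0)

lemma double_sum_split {n : ℕ} (i₀ : Fin n) (F : Fin n → Fin n → ℝ) :
    ∑ i, ∑ j, F i j =
      (∑ i ∈ univ.erase i₀, ∑ j ∈ univ.erase i₀, F i j)
      + (∑ j ∈ univ.erase i₀, F i₀ j)
      + ((∑ i ∈ univ.erase i₀, F i i₀) + F i₀ i₀) := by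
  have h : ∀ G : Fin n → ℝ, ∑ j, G j = ∑ j ∈ univ.erase i₀, G j + G i₀ :=
    fun G => (Finset.sum_erase_add _ _ (mem_univ i₀)).symm
  rw [h (fun i => ∑ j, F i j)]
  simp_rw [h (fun j => F _ j)]
  rw [Finset.sum_add_distrib]
  ring

/-- Change of the `e` terms when moving node `i₀` from community `r` to community `s`:
`e_r` decreases by `d_r`, `e_s` increases by `d_s`, and all other `e_t` are unchanged. -/
theorem e_change_of_move {n : ℕ} {C : Type*} [DecidableEq C]
    (A : Matrix (Fin n) (Fin n) ℝ)
    (m : ℝ) (hm : 2 * m = ∑ i, ∑ j, A i j) (hmpos : 0 < 2 * m)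
    (g g' : Fin n → C) (i₀ : Fin n) (r s : C)
    (hgr : g i₀ = r) (hrs : s ≠ r)
    (hg'ne : ∀ j : Fin n, j ≠ i₀ → g' j = g j) (hg'i : g' i₀ = s)
    (d : C → ℝ)
    (hd : ∀ t : C, d t = (1 / (2 * m)) *
      ((∑ j ∈ univ.filter (fun j => j ≠ i₀),
        (A i₀ j + A j i₀) * (if g j = t then (1 : ℝ) else 0)) + A i₀ i₀)) :
    eComm A m g' r = eComm A m g r - d r ∧
    eComm A m g' s = eComm A m g s + d s ∧
    ∀ t : C, t ≠ r → t ≠ s → eComm A m g' t = eComm A m g t := by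
  have key : ∀ t : C, eComm A m g' t = eComm A m g t +
      ((if g' i₀ = t then (1:ℝ) else 0) - (if g i₀ = t then (1:ℝ) else 0)) * d t := by
    intro t
    have hfilter : univ.filter (fun j => j ≠ i₀) = (univ : Finset (Fin n)).erase i₀ := by
      ext j; simp [Finset.mem_erase, and_comm]
    set f : Fin n → ℝ := fun i => if g i = t then 1 else 0 with hf
    set f' : Fin n → ℝ := fun i => if g' i = t then 1 else 0 with hf'
    have hff : ∀ j ∈ (univ : Finset (Fin n)).erase i₀, f' j = f j := by
      intro j hj
      simp only [hf, hf', hg'ne j (Finset.mem_erase.mp hj).1]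
    have hidem : ∀ h : Fin n → ℝ, (∀ i, h i = 0 ∨ h i = 1) → h i₀ * h i₀ = h i₀ := by
      intro h hh; rcases hh i₀ with h0 | h0 <;> rw [h0] <;> ring
    have hf01 : ∀ i, f i = 0 ∨ f i = 1 := by
      intro i; simp only [hf]; split_ifs <;> simp
    have hf'01 : ∀ i, f' i = 0 ∨ f' i = 1 := by
      intro i; simp only [hf']; split_ifs <;> simp
    have hS : ∑ i, ∑ j, A i j * f' i * f' j =
        ∑ i, ∑ j, A i j * f i * f j +
        (f' i₀ - f i₀) *
          ((∑ j ∈ (univ : Finset (Fin n)).erase i₀, (A i₀ j + A j i₀) * f j) + A i₀ i₀) := by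
      rw [double_sum_split i₀ (fun i j => A i j * f' i * f' j),
          double_sum_split i₀ (fun i j => A i j * f i * f j)]
      have h1 : (∑ i ∈ (univ : Finset (Fin n)).erase i₀,
          ∑ j ∈ (univ : Finset (Fin n)).erase i₀, A i j * f' i * f' j) =
          ∑ i ∈ (univ : Finset (Fin n)).erase i₀,
          ∑ j ∈ (univ : Finset (Fin n)).erase i₀, A i j * f i * f j := by
        refine Finset.sum_congr rfl fun i hi => Finset.sum_congr rfl fun j hj => ?_
        rw [hff i hi, hff j hj]
      have h2 : (∑ j ∈ (univ : Finset (Fin n)).erase i₀, A i₀ j * f' i₀ * f' j) =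
          f' i₀ * ∑ j ∈ (univ : Finset (Fin n)).erase i₀, A i₀ j * f j := by
        rw [Finset.mul_sum]
        refine Finset.sum_congr rfl fun j hj => ?_
        rw [hff j hj]; ring
      have h3 : (∑ i ∈ (univ : Finset (Fin n)).erase i₀, A i i₀ * f' i * f' i₀) =
          f' i₀ * ∑ i ∈ (univ : Finset (Fin n)).erase i₀, A i i₀ * f i := by
        rw [Finset.mul_sum]
        refine Finset.sum_congr rfl fun i hi => ?_
        rw [hff i hi]; ring
      have h2' : (∑ j ∈ (univ : Finset (Fin n)).erase i₀, A i₀ j * f i₀ * f j) =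
          f i₀ * ∑ j ∈ (univ : Finset (Fin n)).erase i₀, A i₀ j * f j := by
        rw [Finset.mul_sum]; refine Finset.sum_congr rfl fun j hj => ?_; ring
      have h3' : (∑ i ∈ (univ : Finset (Fin n)).erase i₀, A i i₀ * f i * f i₀) =
          f i₀ * ∑ i ∈ (univ : Finset (Fin n)).erase i₀, A i i₀ * f i := by
        rw [Finset.mul_sum]; refine Finset.sum_congr rfl fun i hi => ?_; ring
      have hT : (∑ j ∈ (univ : Finset (Fin n)).erase i₀, (A i₀ j + A j i₀) * f j) =
          (∑ j ∈ (univ : Finset (Fin n)).erase i₀, A i₀ j * f j)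
          + (∑ i ∈ (univ : Finset (Fin n)).erase i₀, A i i₀ * f i) := by
        rw [← Finset.sum_add_distrib]
        refine Finset.sum_congr rfl fun j hj => ?_; ring
      simp only [h1, h2, h3, h2', h3', hT]
      have e1 := hidem f hf01
      have e2 := hidem f' hf'01
      linear_combination A i₀ i₀ * e2 - A i₀ i₀ * e1
    show (1 / (2 * m)) * ∑ i, ∑ j, A i j * f' i * f' j =
      (1 / (2 * m)) * (∑ i, ∑ j, A i j * f i * f j) + (f' i₀ - f i₀) * d t
    rw [hS, hd t, hfilter]
    ring
  refine ⟨?_, ?_, fun t htr hts => ?_⟩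
  · rw [key r]
    have h1 : g' i₀ ≠ r := by rw [hg'i]; exact hrs
    simp [h1, hgr]
    ring
  · rw [key s]
    have h1 : g i₀ ≠ s := by rw [hgr]; exact fun h => hrs h.symm
    simp [h1, hg'i]
  · rw [key t]
    have h1 : g' i₀ ≠ t := by rw [hg'i]; exact fun h => hts h.symm
    have h2 : g i₀ ≠ t := by rw [hgr]; exact fun h => htr h.symm
    simp [h1, h2]
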